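/- arXiv:1910.03444 — 4 statements merged into one kernel-verified Lean document; each statement's English description precedes it below -/
import Mathlib

section
/- If λ ≤ 1, then for every integer x ≥ 0 one has b(x) ≤ e^{Δ} π_λ(x); equivalently, log ρ(Q, Poiss_λ) ≤ Δ, where ρ(Q, Poiss_λ) := sup_{x ≥ 0} b(x)/π_λ(x). -/
open scoped BigOperators

/-- Poisson probability mass function with parameter `l`. -/
noncomputable def poissonPMF (l : ℝ) (x : ℕ) : ℝ :=
  Real.exp (-l) * l ^ x / (Nat.factorial x)

/-- Poisson binomial probability mass function:
`b(x) = Σ_{J ⊆ ℕ, #J = x} ∏_{i ∈ J} p i · ∏_{k ∉ J} (1 - p k)`. -/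
noncomputable def pb (p : ℕ → ℝ) (x : ℕ) : ℝ :=
  ∑' J : {J : Finset ℕ // J.card = x},
    (∏ i ∈ (J : Finset ℕ), p i) * ∏' k : {k : ℕ // k ∉ (J : Finset ℕ)}, (1 - p k)

/-!
Write `q k = p k / (1 - p k)` for the odds and `λₛ = ∑_{k ∈ s} p k` for finite `s`. The finite
Poisson binomial law factors as `bₛ(x) = ∏_{k ∈ s} (1 - p k) · eₓ(q)`, where `eₓ` is the `x`-th
elementary symmetric polynomial. If `λₛ ≤ 1` then `(x + 1) eₓ₊₁ ≤ λₛ eₓ` for `x ≥ 1`: for `x = 1`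
this is the weighted Cauchy–Schwarz inequality `(∑ p q)² ≤ λₛ ∑ p q²` (note `q = p + p q`), and
adding one index preserves it since `eₓ₊₁ ≤ eₓ`. Hence `x! bₛ(x) ≤ λₛ^(x-1) ∏ (1 - p k) e₁`, and
`∏ (1 - p k) e₁ ≤ λₛ ∏ (1 - p k + p k² / λₛ) ≤ λₛ exp (Δₛ - λₛ)`, where `Δₛ = λₛ⁻¹ ∑ p k²`, by
`1 + ∑ a ≤ ∏ (1 + a)` and `1 + t ≤ exp t`. For an infinite sequence, every finite partial sum of
the series defining `b(x)` is at most `bₛ(x)` once `s` contains the subsets involved, because the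
omitted factors `1 - p k` lie in `[0, 1]`; letting `s` exhaust `ℕ` gives the bound.
-/

open Filter Topology Finset Nat

namespace PoissonBinomial

section Esymm

variable {ι R : Type*} [CommSemiring R] (q : ι → R)

def esymm (s : Finset ι) (n : ℕ) : R :=
  ∑ J ∈ s.powersetCard n, ∏ i ∈ J, q i

@[simp]
lemma esymm_zero (s : Finset ι) : esymm q s 0 = 1 := by
  simp [esymm]

lemma esymm_one (s : Finset ι) : esymm q s 1 = ∑ i ∈ s, q i := by
  simp [esymm, powersetCard_one]

@[simp]
lemma esymm_empty_succ (n : ℕ) : esymm q ∅ (n + 1) = 0 := by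
  rw [esymm, powersetCard_eq_empty.2 (by simp), sum_empty]

lemma esymm_insert [DecidableEq ι] {a : ι} {s : Finset ι} (ha : a ∉ s) (n : ℕ) :
    esymm q (insert a s) (n + 1) = esymm q s (n + 1) + q a * esymm q s n := by
  rw [esymm, powersetCard_succ_insert ha, sum_union, sum_image, esymm, esymm, mul_sum]
  · congr 1
    refine sum_congr rfl fun J hJ => prod_insert fun haJ => ha ?_
    exact (mem_powersetCard.1 hJ).1 haJ
  · exact insert_erase_invOn.2.injOn.mono fun J hJ => notMem_mono (mem_powersetCard.1 hJ).1 ha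
  · aesop (add simp [disjoint_left, mem_powersetCard, insert_subset_iff])

lemma sq_sum_eq_sum_sq_add_two_mul_esymm_two [DecidableEq ι] (s : Finset ι) :
    (∑ i ∈ s, q i) ^ 2 = ∑ i ∈ s, q i ^ 2 + 2 * esymm q s 2 := by
  induction s using Finset.induction_on with
  | empty => simp
  | insert a s ha ih =>
    rw [sum_insert ha, sum_insert ha, esymm_insert q ha, esymm_one, add_sq, ih]
    ring

end Esymm

lemma esymm_nonneg {ι : Type*} {q : ι → ℝ} (hq : ∀ i, 0 ≤ q i) (s : Finset ι) (n : ℕ) :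
    0 ≤ esymm q s n :=
  sum_nonneg fun _ _ => prod_nonneg fun i _ => hq i

section Odds

variable {t : ℝ}

noncomputable def odds (t : ℝ) : ℝ := t / (1 - t)

lemma odds_nonneg (ht : t ∈ Set.Ico 0 1) : 0 ≤ odds t :=
  div_nonneg ht.1 (sub_nonneg.2 ht.2.le)

lemma odds_mul_one_sub (ht : t ≠ 1) : odds t * (1 - t) = t :=
  div_mul_cancel₀ _ (sub_ne_zero.2 ht.symm)

lemma odds_eq_add_mul (ht : t ≠ 1) : odds t = t + t * odds t := by
  linear_combination odds_mul_one_sub ht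

end Odds

lemma one_add_sum_le_prod_one_add {ι : Type*} [DecidableEq ι] {a : ι → ℝ} (ha : ∀ i, 0 ≤ a i)
    (s : Finset ι) : 1 + ∑ i ∈ s, a i ≤ ∏ i ∈ s, (1 + a i) := by
  induction s using Finset.induction_on with
  | empty => simp
  | insert b s hb ih =>
    rw [sum_insert hb, prod_insert hb]
    nlinarith [ha b, sum_nonneg fun i (_ : i ∈ s) => ha i]

lemma prod_one_sub_add_sq_div_le_exp {ι : Type*} {p : ι → ℝ} (hp : ∀ k, p k ≤ 1) {c : ℝ}
    (hc : 0 < c) (s : Finset ι) :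
    ∏ k ∈ s, (1 - p k + p k ^ 2 / c) ≤ Real.exp ((∑ k ∈ s, p k ^ 2) / c - ∑ k ∈ s, p k) := by
  rw [sum_div, ← sum_sub_distrib, Real.exp_sum]
  refine prod_le_prod (fun k _ => ?_) fun k _ => ?_
  · have := hp k
    have : 0 ≤ p k ^ 2 / c := by positivity
    linarith
  · linarith [Real.add_one_le_exp (p k ^ 2 / c - p k)]

section Finite

variable {ι : Type*} [DecidableEq ι] {p : ι → ℝ}

def pbFin (p : ι → ℝ) (s : Finset ι) (n : ℕ) : ℝ :=
  ∑ J ∈ s.powersetCard n, (∏ i ∈ J, p i) * ∏ k ∈ s \ J, (1 - p k)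

lemma pbFin_eq_prod_mul_esymm (hp : ∀ i, p i ≠ 1) (s : Finset ι) (n : ℕ) :
    pbFin p s n = (∏ k ∈ s, (1 - p k)) * esymm (odds ∘ p) s n := by
  rw [pbFin, esymm, mul_sum]
  refine sum_congr rfl fun J hJ => ?_
  rw [← prod_sdiff (mem_powersetCard.1 hJ).1]
  have : ∏ i ∈ J, p i = ∏ i ∈ J, ((odds ∘ p) i * (1 - p i)) :=
    prod_congr rfl fun i _ => (odds_mul_one_sub (hp i)).symm
  rw [this, prod_mul_distrib]
  ring

variable (hp : ∀ i, p i ∈ Set.Ico 0 1)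
include hp

lemma two_mul_esymm_two_le {s : Finset ι} (hs : ∑ i ∈ s, p i ≤ 1) :
    2 * esymm (odds ∘ p) s 2 ≤ (∑ i ∈ s, p i) * esymm (odds ∘ p) s 1 := by
  set q := odds ∘ p
  have hq : ∀ i, q i = p i + p i * q i := fun i => odds_eq_add_mul (hp i).2.ne
  have hq0 : ∀ i, 0 ≤ q i := fun i => odds_nonneg (hp i)
  have hsum_q : ∑ i ∈ s, q i = ∑ i ∈ s, p i + ∑ i ∈ s, p i * q i := by
    rw [← sum_add_distrib]
    exact sum_congr rfl fun i _ => hq i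
  have hsum_sq : ∑ i ∈ s, q i ^ 2 = ∑ i ∈ s, p i * q i + ∑ i ∈ s, p i * q i ^ 2 := by
    rw [← sum_add_distrib]
    refine sum_congr rfl fun i _ => ?_
    linear_combination q i * hq i
  have hcs : (∑ i ∈ s, p i * q i) ^ 2 ≤ (∑ i ∈ s, p i) * ∑ i ∈ s, p i * q i ^ 2 :=
    sum_sq_le_sum_mul_sum_of_sq_le_mul s (fun i _ => (hp i).1)
      (fun i _ => mul_nonneg (hp i).1 (sq_nonneg _)) fun i _ => le_of_eq (by ring)
  have hm : 0 ≤ ∑ i ∈ s, p i * q i := sum_nonneg fun i _ => mul_nonneg (hp i).1 (hq0 i)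
  have hr : 0 ≤ ∑ i ∈ s, p i * q i ^ 2 :=
    sum_nonneg fun i _ => mul_nonneg (hp i).1 (sq_nonneg _)
  have hsq := sq_sum_eq_sum_sq_add_two_mul_esymm_two q s
  rw [hsum_q, hsum_sq] at hsq
  rw [esymm_one, hsum_q]
  linarith [mul_le_of_le_one_left hm hs, mul_le_of_le_one_left hr hs]

lemma succ_mul_esymm_succ_le {s : Finset ι} (hs : ∑ i ∈ s, p i ≤ 1) {n : ℕ} (hn : 1 ≤ n) :
    (n + 1 : ℝ) * esymm (odds ∘ p) s (n + 1) ≤ (∑ i ∈ s, p i) * esymm (odds ∘ p) s n := by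
  set q := odds ∘ p
  induction s using Finset.induction_on generalizing n with
  | empty =>
    obtain ⟨m, rfl⟩ := Nat.exists_eq_add_of_le' hn
    simp
  | insert a s ha ih =>
    obtain rfl | hn := hn.eq_or_lt
    · norm_num
      exact two_mul_esymm_two_le hp hs
    obtain ⟨m, rfl⟩ : ∃ m, n = m + 1 := ⟨n - 1, by omega⟩
    have hs' : ∑ i ∈ s, p i ≤ 1 :=
      (sum_le_sum_of_subset_of_nonneg (subset_insert a s) fun i _ _ => (hp i).1).trans hs
    have ih₁ := ih hs' (n := m + 1) (by omega)
    have ih₂ := ih hs' (n := m) (by omega)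
    have hE : ∀ k, 0 ≤ esymm q s k := esymm_nonneg (fun i => odds_nonneg (hp i)) s
    have hanti : esymm q s (m + 1) ≤ esymm q s m := by
      have := mul_le_of_le_one_left (hE m) hs'
      nlinarith [hE (m + 1)]
    have hqa : q a - p a = p a * q a := by
      have : q a = p a + p a * q a := odds_eq_add_mul (hp a).2.ne
      linear_combination this
    have hqa0 : 0 ≤ q a := odds_nonneg (hp a)
    have hkey : (q a - p a) * esymm q s (m + 1) ≤ p a * q a * esymm q s m := by
      rw [hqa]
      exact mul_le_mul_of_nonneg_left hanti (mul_nonneg (hp a).1 hqa0)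
    rw [esymm_insert q ha, esymm_insert q ha, sum_insert ha]
    push_cast at ih₁ ⊢
    linear_combination ih₁ + hkey + mul_le_mul_of_nonneg_left ih₂ hqa0

lemma factorial_mul_esymm_le {s : Finset ι} (hs : ∑ i ∈ s, p i ≤ 1) (n : ℕ) :
    ((n + 1)! : ℝ) * esymm (odds ∘ p) s (n + 1) ≤
      (∑ i ∈ s, p i) ^ n * esymm (odds ∘ p) s 1 := by
  induction n with
  | zero => simp
  | succ n ih =>
    have hstep := succ_mul_esymm_succ_le hp hs (n := n + 1) (by omega)
    have hl0 : 0 ≤ ∑ i ∈ s, p i := sum_nonneg fun i _ => (hp i).1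
    calc ((n + 1 + 1)! : ℝ) * esymm (odds ∘ p) s (n + 1 + 1)
        = (n + 1)! * (((n + 1 : ℕ) + 1 : ℝ) * esymm (odds ∘ p) s (n + 1 + 1)) := by
          rw [Nat.factorial_succ (n + 1)]
          push_cast
          ring
      _ ≤ (n + 1)! * ((∑ i ∈ s, p i) * esymm (odds ∘ p) s (n + 1)) := by gcongr
      _ = (∑ i ∈ s, p i) * ((n + 1)! * esymm (odds ∘ p) s (n + 1)) := by ring
      _ ≤ (∑ i ∈ s, p i) * ((∑ i ∈ s, p i) ^ n * esymm (odds ∘ p) s 1) := by gcongr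
      _ = (∑ i ∈ s, p i) ^ (n + 1) * esymm (odds ∘ p) s 1 := by ring

lemma prod_one_sub_mul_esymm_one_le {s : Finset ι} (hs : 0 < ∑ i ∈ s, p i) :
    (∏ k ∈ s, (1 - p k)) * esymm (odds ∘ p) s 1 ≤
      (∑ i ∈ s, p i) * ∏ k ∈ s, (1 - p k + p k ^ 2 / ∑ i ∈ s, p i) := by
  set l := ∑ i ∈ s, p i
  have hq : ∀ i, odds (p i) = p i + p i * odds (p i) := fun i => odds_eq_add_mul (hp i).2.ne
  have hE : esymm (odds ∘ p) s 1 = l * (1 + ∑ i ∈ s, p i * odds (p i) / l) := by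
    rw [esymm_one, mul_add, mul_one, mul_sum]
    simp only [Function.comp_apply]
    rw [sum_congr rfl fun i _ => hq i, sum_add_distrib]
    congr 1
    exact sum_congr rfl fun i _ => by field_simp
  have hfactor : ∀ k, (1 - p k) * (1 + p k * odds (p k) / l) = 1 - p k + p k ^ 2 / l := by
    intro k
    have := odds_mul_one_sub (hp k).2.ne
    field_simp
    linear_combination p k * this
  calc (∏ k ∈ s, (1 - p k)) * esymm (odds ∘ p) s 1
      ≤ (∏ k ∈ s, (1 - p k)) * (l * ∏ k ∈ s, (1 + p k * odds (p k) / l)) := by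
        rw [hE]
        gcongr
        · exact prod_nonneg fun k _ => sub_nonneg.2 (hp k).2.le
        · exact one_add_sum_le_prod_one_add
            (fun i => div_nonneg (mul_nonneg (hp i).1 (odds_nonneg (hp i))) hs.le) s
    _ = l * ∏ k ∈ s, (1 - p k + p k ^ 2 / l) := by
        rw [mul_left_comm, ← prod_mul_distrib, prod_congr rfl fun k _ => hfactor k]

theorem pbFin_le_exp_mul_poissonPMF {s : Finset ι} (hs₀ : 0 < ∑ i ∈ s, p i)
    (hs₁ : ∑ i ∈ s, p i ≤ 1) (n : ℕ) :
    pbFin p s n ≤ Real.exp ((∑ i ∈ s, p i ^ 2) / ∑ i ∈ s, p i) * poissonPMF (∑ i ∈ s, p i) n := by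
  set l := ∑ i ∈ s, p i
  have hB : ∏ k ∈ s, (1 - p k + p k ^ 2 / l) ≤ Real.exp ((∑ i ∈ s, p i ^ 2) / l - l) :=
    prod_one_sub_add_sq_div_le_exp (fun k => (hp k).2.le) hs₀ s
  have hP : 0 ≤ ∏ k ∈ s, (1 - p k) := prod_nonneg fun k _ => sub_nonneg.2 (hp k).2.le
  have hrhs : Real.exp ((∑ i ∈ s, p i ^ 2) / l) * poissonPMF l n =
      l ^ n * Real.exp ((∑ i ∈ s, p i ^ 2) / l - l) / n ! := by
    rw [poissonPMF, Real.exp_sub, Real.exp_neg]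
    field_simp
  rw [hrhs, le_div_iff₀ (by positivity), pbFin_eq_prod_mul_esymm (fun i => (hp i).2.ne)]
  cases n with
  | zero =>
    simp only [esymm_zero, mul_one, pow_zero, one_mul, Nat.factorial_zero, Nat.cast_one]
    refine le_trans (prod_le_prod (fun k _ => sub_nonneg.2 (hp k).2.le) fun k _ => ?_) hB
    have : 0 ≤ p k ^ 2 / l := by positivity
    linarith
  | succ n =>
    calc (∏ k ∈ s, (1 - p k)) * esymm (odds ∘ p) s (n + 1) * (n + 1)!
        = (∏ k ∈ s, (1 - p k)) * ((n + 1)! * esymm (odds ∘ p) s (n + 1)) := by ring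
      _ ≤ (∏ k ∈ s, (1 - p k)) * (l ^ n * esymm (odds ∘ p) s 1) :=
        mul_le_mul_of_nonneg_left (factorial_mul_esymm_le hp hs₁ n) hP
      _ = l ^ n * ((∏ k ∈ s, (1 - p k)) * esymm (odds ∘ p) s 1) := by ring
      _ ≤ l ^ n * (l * ∏ k ∈ s, (1 - p k + p k ^ 2 / l)) :=
        mul_le_mul_of_nonneg_left (prod_one_sub_mul_esymm_one_le hp hs₀) (by positivity)
      _ ≤ l ^ (n + 1) * Real.exp ((∑ i ∈ s, p i ^ 2) / l - l) := by
        rw [pow_succ, mul_assoc]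
        gcongr

end Finite

lemma tprod_le_prod_of_nonneg_of_le_one {β : Type*} {f : β → ℝ} (h0 : ∀ i, 0 ≤ f i)
    (h1 : ∀ i, f i ≤ 1) (u : Finset β) : ∏' i, f i ≤ ∏ i ∈ u, f i := by
  have hanti := prod_anti_set_of_le_one h0 h1
  have hprod : HasProd f (⨅ v : Finset β, ∏ i ∈ v, f i) :=
    tendsto_atTop_ciInf hanti ⟨0, by rintro _ ⟨v, rfl⟩; exact prod_nonneg fun i _ => h0 i⟩
  rw [hprod.tprod_eq]
  exact hanti.le_of_tendsto hprod u

section Infinite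

variable {p : ℕ → ℝ} (hp : ∀ i, p i ∈ Set.Ico 0 1)
include hp

lemma tprod_one_sub_le_prod_sdiff (J s : Finset ℕ) :
    ∏' k : {k // k ∉ J}, (1 - p k) ≤ ∏ k ∈ s \ J, (1 - p k) := by
  calc ∏' k : {k // k ∉ J}, (1 - p k) ≤ ∏ k ∈ s.subtype (· ∉ J), (1 - p k) :=
        tprod_le_prod_of_nonneg_of_le_one (fun k : {k // k ∉ J} => sub_nonneg.2 (hp k).2.le)
          (fun k => sub_le_self _ (hp k).1) _
    _ = ∏ k ∈ s \ J, (1 - p k) := by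
        rw [prod_subtype_eq_prod_filter (fun k => 1 - p k), filter_notMem_eq_sdiff]

lemma sum_le_pbFin {n : ℕ} (𝒥 : Finset {J : Finset ℕ // J.card = n}) {s : Finset ℕ}
    (hs : ∀ J ∈ 𝒥, (J : Finset ℕ) ⊆ s) :
    ∑ J ∈ 𝒥, (∏ i ∈ (J : Finset ℕ), p i) * ∏' k : {k // k ∉ (J : Finset ℕ)}, (1 - p k) ≤
      pbFin p s n := by
  calc _ ≤ ∑ J ∈ 𝒥, (∏ i ∈ (J : Finset ℕ), p i) * ∏ k ∈ s \ J, (1 - p k) :=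
        sum_le_sum fun J _ => mul_le_mul_of_nonneg_left (tprod_one_sub_le_prod_sdiff hp J s)
          (prod_nonneg fun i _ => (hp i).1)
    _ = ∑ J ∈ 𝒥.map (Function.Embedding.subtype _), (∏ i ∈ J, p i) * ∏ k ∈ s \ J, (1 - p k) := by
        rw [sum_map]
        rfl
    _ ≤ pbFin p s n := by
        refine sum_le_sum_of_subset_of_nonneg (fun J hJ => ?_) fun J _ _ => ?_
        · obtain ⟨J, hJ𝒥, rfl⟩ := mem_map.1 hJ
          exact mem_powersetCard.2 ⟨hs J hJ𝒥, J.2⟩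
        · exact mul_nonneg (prod_nonneg fun i _ => (hp i).1)
            (prod_nonneg fun k _ => sub_nonneg.2 (hp k).2.le)

lemma pb_nonneg (n : ℕ) : 0 ≤ pb p n :=
  tsum_nonneg fun _ => mul_nonneg (prod_nonneg fun i _ => (hp i).1)
    (tprod_nonneg fun k => sub_nonneg.2 (hp k).2.le)

lemma pb_le_of_tendsto {n : ℕ} {g : Finset ℕ → ℝ} {C : ℝ} (hg : Tendsto g atTop (𝓝 C))
    (h : ∀ᶠ s in atTop, pbFin p s n ≤ g s) : pb p n ≤ C := by
  have hpartial : ∀ 𝒥 : Finset {J : Finset ℕ // J.card = n},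
      ∑ J ∈ 𝒥, (∏ i ∈ (J : Finset ℕ), p i) * ∏' k : {k // k ∉ (J : Finset ℕ)}, (1 - p k) ≤ C :=
    fun 𝒥 => ge_of_tendsto hg <| (h.and (eventually_ge_atTop (𝒥.sup Subtype.val))).mono
      fun s ⟨hs, hsub⟩ => (sum_le_pbFin hp 𝒥 fun J hJ => (le_sup hJ).trans hsub).trans hs
  exact tsum_le_of_sum_le' (by simpa using hpartial ∅) hpartial

end Infinite

lemma poissonPMF_pos {l : ℝ} (hl : 0 < l) (n : ℕ) : 0 < poissonPMF l n := by
  unfold poissonPMF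
  positivity

lemma continuous_poissonPMF (n : ℕ) : Continuous fun l => poissonPMF l n := by
  unfold poissonPMF
  fun_prop

lemma log_iSup_div_le {a b : ℕ → ℝ} {Δ : ℝ} (ha : ∀ n, 0 ≤ a n) (hb : ∀ n, 0 < b n)
    (hab : ∀ n, a n ≤ Real.exp Δ * b n) (hΔ : 0 ≤ Δ) :
    Real.log (⨆ n, a n / b n) ≤ Δ := by
  have hratio : ∀ n, a n / b n ≤ Real.exp Δ := fun n => (div_le_iff₀ (hb n)).2 (hab n)
  have hsup : 0 ≤ ⨆ n, a n / b n :=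
    (div_nonneg (ha 0) (hb 0).le).trans (le_ciSup ⟨_, Set.forall_mem_range.2 hratio⟩ 0)
  rcases hsup.eq_or_lt with h | h
  · rwa [← h, Real.log_zero]
  · exact (Real.log_le_iff_le_exp h).2 (ciSup_le hratio)

theorem pb_le_exp_mul_poissonPMF {p : ℕ → ℝ} (hp : ∀ i, p i ∈ Set.Ico 0 1) (hsum : Summable p)
    (hl₀ : 0 < ∑' i, p i) (hl₁ : ∑' i, p i ≤ 1) (n : ℕ) :
    pb p n ≤ Real.exp ((∑' i, p i ^ 2) / ∑' i, p i) * poissonPMF (∑' i, p i) n := by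
  have hsum₂ : Summable fun i => p i ^ 2 :=
    hsum.of_nonneg_of_le (fun i => sq_nonneg _) fun i => by nlinarith [(hp i).1, (hp i).2]
  have hl : Tendsto (fun s => ∑ i ∈ s, p i) atTop (𝓝 (∑' i, p i)) := hsum.hasSum
  refine pb_le_of_tendsto hp
    ((hsum₂.hasSum.div hl hl₀.ne').rexp.mul ((continuous_poissonPMF n).tendsto _ |>.comp hl)) ?_
  filter_upwards [hl.eventually_const_lt hl₀] with s hs
  exact pbFin_le_exp_mul_poissonPMF hp hs ((hsum.sum_le_tsum s fun i _ => (hp i).1).trans hl₁) n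

end PoissonBinomial

open PoissonBinomial

/-- If `λ ≤ 1` then `b(x) ≤ e^Δ · π_λ(x)` for all `x`; equivalently
`log ρ(Q, Poiss_λ) ≤ Δ` where `Δ = λ⁻¹ Σ p_i²`. -/
theorem stmt_1 (p : ℕ → ℝ) (hp : ∀ i, p i ∈ Set.Ico (0 : ℝ) 1) (hsum : Summable p)
    (l : ℝ) (hl : l = ∑' i, p i) (hlpos : 0 < l) (hl1 : l ≤ 1)
    (Δ : ℝ) (hΔ : Δ = l⁻¹ * ∑' i, p i ^ 2) :
    (∀ x : ℕ, pb p x ≤ Real.exp Δ * poissonPMF l x) ∧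
      Real.log (⨆ x : ℕ, pb p x / poissonPMF l x) ≤ Δ := by
  have hbound : ∀ x, pb p x ≤ Real.exp Δ * poissonPMF l x := fun x => by
    rw [hΔ, hl, inv_mul_eq_div]
    exact pb_le_exp_mul_poissonPMF hp hsum (hl ▸ hlpos) (hl ▸ hl1) x
  have hΔ₀ : 0 ≤ Δ := hΔ ▸ mul_nonneg (inv_nonneg.2 hlpos.le) (tsum_nonneg fun i => sq_nonneg _)
  exact ⟨hbound, log_iSup_div_le (pb_nonneg hp) (poissonPMF_pos hlpos) hbound hΔ₀⟩
end

section
/- If λ ≤ 1, then the density ratio at x = 1 satisfies b(1)/π_λ(1) ≥ exp( Δ(1 − Δ/2 − λ/(2(1 − p*))) ); in particular ρ(Q, Poiss_λ) := sup_{x ≥ 0} b(x)/π_λ(x) satisfies log ρ(Q, Poiss_λ) ≥ Δ(1 − Δ/2 − λ/(2(1 − p*))). -/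
open scoped BigOperators

/-!
Write `F = ∏ (1 - p_k)`. Then `b(1) = F · Σ p_i / (1 - p_i)`. The estimate
`log (1 - q) ≥ -q - q² / (2 (1 - q))` gives `F ≥ exp (-λ - λΔ / (2 (1 - p*)))`, and
`p / (1 - p) ≥ p + p²` gives `Σ p_i / (1 - p_i) ≥ λ (1 + Δ)`; with `log (1 + Δ) ≥ Δ - Δ² / 2`
this is the bound on `b(1) / π_λ(1)`. The supremum is finite: `b(x)` is at most the elementary
symmetric sum `e_x(p) ≤ λ^x / x!`, so every ratio `b(x) / π_λ(x)` is at most `e^λ`.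
-/

open Real Finset Nat

theorem Real.sub_sq_div_two_le_log_one_add {x : ℝ} (hx : 0 ≤ x) :
    x - x ^ 2 / 2 ≤ log (1 + x) := by
  refine le_trans ?_ (le_log_one_add_of_nonneg hx)
  rw [le_div_iff₀ (by linarith)]
  nlinarith [pow_nonneg hx 3]

theorem Real.neg_sub_sq_div_le_log_one_sub {q : ℝ} (h0 : 0 ≤ q) (h1 : q < 1) :
    -q - q ^ 2 / (2 * (1 - q)) ≤ log (1 - q) := by
  have hu : 0 < 1 - q := by linarith
  set y := q + q ^ 2 / (2 * (1 - q)) with hy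
  have hy0 : 0 ≤ y := by positivity
  rw [le_log_iff_exp_le hu, show -q - q ^ 2 / (2 * (1 - q)) = -y by ring, exp_neg,
    inv_le_iff_one_le_mul₀ (exp_pos y)]
  -- `(1 - q) * (1 + y + y ^ 2 / 2) - 1 = q ^ 4 / (8 * (1 - q))`
  calc (1 : ℝ) ≤ (1 - q) * (1 + y + y ^ 2 / 2) := by
        rw [hy]; field_simp; nlinarith [pow_nonneg h0 4]
    _ ≤ (1 - q) * exp y := by gcongr; exact quadratic_le_exp_of_nonneg hy0

theorem tprod_le_one_of_nonneg {ι α : Type*} [CommMonoidWithZero α] [PartialOrder α]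
    [ZeroLEOneClass α] [PosMulMono α] [TopologicalSpace α] [ClosedIicTopology α] {f : ι → α}
    (h0 : ∀ i, 0 ≤ f i) (h1 : ∀ i, f i ≤ 1) : ∏' i, f i ≤ 1 := by
  by_cases hf : Multipliable f
  · exact le_of_tendsto' hf.hasProd fun s => prod_le_one (fun i _ => h0 i) fun i _ => h1 i
  · rw [tprod_eq_one_of_not_multipliable hf]

theorem Finset.factorial_mul_sum_powersetCard_prod_le {α R : Type*} [DecidableEq α]
    [CommSemiring R] [PartialOrder R] [IsOrderedRing R] (s : Finset α) {f : α → R}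
    (hf : ∀ i ∈ s, 0 ≤ f i) (n : ℕ) :
    (n ! : R) * ∑ t ∈ s.powersetCard n, ∏ i ∈ t, f i ≤ (∑ i ∈ s, f i) ^ n := by
  classical
  -- subsets of `s` are the squarefree exponent vectors of the multinomial expansion,
  -- each with coefficient `n!`
  set ind : Finset α → α → ℕ := fun t i => if i ∈ t then 1 else 0
  have hind : ind.Injective := fun t t' h => by
    ext i
    have := congrFun h i
    by_cases hi : i ∈ t <;> by_cases hi' : i ∈ t' <;> simp_all [ind]
  have hmem : ∀ t ∈ s.powersetCard n, ind t ∈ s.piAntidiag n := by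
    intro t ht
    rw [mem_powersetCard] at ht
    rw [mem_piAntidiag]
    refine ⟨by simp [ind, inter_eq_right.2 ht.1, ht.2], fun i hi => ht.1 ?_⟩
    by_contra h
    simp [ind, h] at hi
  have hterm : ∀ t ∈ s.powersetCard n,
      (n ! : R) * ∏ i ∈ t, f i = Nat.multinomial s (ind t) * ∏ i ∈ s, f i ^ ind t i := by
    intro t ht
    have hmult : Nat.multinomial s (ind t) = n ! := by
      have := Nat.multinomial_spec s (ind t)
      rwa [prod_eq_one (fun i _ => by by_cases h : i ∈ t <;> simp [ind, h]), one_mul,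
        (mem_piAntidiag.1 (hmem t ht)).1] at this
    rw [mem_powersetCard] at ht
    rw [hmult]
    simp [ind, pow_ite, prod_ite_mem, inter_eq_right.2 ht.1]
  rw [sum_pow_eq_sum_piAntidiag, mul_sum, sum_congr rfl hterm,
    ← sum_image (f := fun k => (Nat.multinomial s k : R) * ∏ i ∈ s, f i ^ k i) hind.injOn]
  refine sum_le_sum_of_subset_of_nonneg (image_subset_iff.2 hmem) fun k _ _ => ?_
  exact mul_nonneg (Nat.cast_nonneg _) (prod_nonneg fun i hi => pow_nonneg (hf i hi) _)

section OneSub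

variable {ι : Type*} {p : ι → ℝ}

theorem Summable.sq_of_nonneg_of_le_one (hsum : Summable p) (hp0 : ∀ i, 0 ≤ p i)
    (hp1 : ∀ i, p i ≤ 1) : Summable fun i => p i ^ 2 :=
  hsum.of_nonneg_of_le (fun i => sq_nonneg _) fun i => by nlinarith [hp0 i, hp1 i]

theorem summable_log_one_sub (hsum : Summable p) : Summable fun i => log (1 - p i) := by
  simpa [sub_eq_add_neg] using Real.summable_log_one_add_of_summable hsum.neg

theorem exp_tsum_log_one_sub (hsum : Summable p) (hp1 : ∀ i, p i < 1) :
    exp (∑' i, log (1 - p i)) = ∏' i, (1 - p i) :=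
  rexp_tsum_eq_tprod (fun i => sub_pos.2 (hp1 i)) (summable_log_one_sub hsum)

theorem prod_mul_tprod_compl_one_sub (hsum : Summable p) (hp1 : ∀ i, p i < 1) (J : Finset ι) :
    (∏ i ∈ J, (1 - p i)) * ∏' k : {k // k ∉ J}, (1 - p k) = ∏' k, (1 - p k) := by
  have hlog := summable_log_one_sub hsum
  rw [← exp_tsum_log_one_sub hsum hp1, ← hlog.sum_add_tsum_subtype_compl J, exp_add, exp_sum,
    ← rexp_tsum_eq_tprod (f := fun k : {k // k ∉ J} => 1 - p k) (fun k => sub_pos.2 (hp1 k))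
      (hlog.subtype _)]
  congr 1
  exact prod_congr rfl fun i _ => (exp_log (sub_pos.2 (hp1 i))).symm

theorem neg_tsum_sub_tsum_sq_div_le_tsum_log_one_sub {s : ℝ} (hsum : Summable p)
    (hp0 : ∀ i, 0 ≤ p i) (hps : ∀ i, p i ≤ s) (hs : s < 1) :
    -(∑' i, p i) - (∑' i, p i ^ 2) / (2 * (1 - s)) ≤ ∑' i, log (1 - p i) := by
  have hsq : Summable fun i => p i ^ 2 :=
    hsum.sq_of_nonneg_of_le_one hp0 fun i => (hps i).trans hs.le
  rw [← tsum_neg, ← tsum_div_const, ← hsum.neg.tsum_sub (hsq.div_const _)]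
  refine (hsum.neg.sub (hsq.div_const _)).tsum_le_tsum (fun i => ?_) (summable_log_one_sub hsum)
  calc -p i - p i ^ 2 / (2 * (1 - s)) ≤ -p i - p i ^ 2 / (2 * (1 - p i)) := by
        gcongr
        linarith [hps i]
    _ ≤ log (1 - p i) := Real.neg_sub_sq_div_le_log_one_sub (hp0 i) ((hps i).trans_lt hs)

theorem tsum_add_tsum_sq_le_tsum_div_one_sub {s : ℝ} (hsum : Summable p)
    (hp0 : ∀ i, 0 ≤ p i) (hps : ∀ i, p i ≤ s) (hs : s < 1) :
    ∑' i, p i + ∑' i, p i ^ 2 ≤ ∑' i, p i / (1 - p i) := by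
  have hp1 : ∀ i, 0 < 1 - p i := fun i => by linarith [hps i]
  have hsq := hsum.sq_of_nonneg_of_le_one hp0 fun i => (hps i).trans hs.le
  have hdiv : Summable fun i => p i / (1 - p i) :=
    (hsum.div_const (1 - s)).of_nonneg_of_le (fun i => div_nonneg (hp0 i) (hp1 i).le)
      fun i => div_le_div_of_nonneg_left (hp0 i) (by linarith) (by linarith [hps i])
  rw [← hsum.tsum_add hsq]
  refine (hsum.add hsq).tsum_le_tsum (fun i => ?_) hdiv
  rw [le_div_iff₀ (hp1 i)]
  nlinarith [hp0 i, hps i]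

end OneSub

theorem pb_one {p : ℕ → ℝ} (hsum : Summable p) (hp1 : ∀ i, p i < 1) :
    pb p 1 = (∏' k, (1 - p k)) * ∑' i, p i / (1 - p i) := by
  let single : ℕ ≃ {J : Finset ℕ // J.card = 1} :=
    Equiv.ofBijective (fun i => ⟨{i}, card_singleton i⟩)
      ⟨fun i j h => singleton_injective (congrArg Subtype.val h), fun J => by
        obtain ⟨i, hi⟩ := card_eq_one.1 J.2
        exact ⟨i, Subtype.ext hi.symm⟩⟩
  rw [pb, ← single.tsum_eq, ← tsum_mul_left]
  refine tsum_congr fun i => ?_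
  show (∏ j ∈ {i}, p j) * ∏' k : {k // k ∉ ({i} : Finset ℕ)}, (1 - p k) = _
  rw [← prod_mul_tprod_compl_one_sub hsum hp1 {i}, prod_singleton, prod_singleton]
  field_simp [(sub_pos.2 (hp1 i)).ne']

theorem pb_le_pow_div_factorial {p : ℕ → ℝ} (hsum : Summable p) (hp0 : ∀ i, 0 ≤ p i)
    (hp1 : ∀ i, p i ≤ 1) (x : ℕ) : pb p x ≤ (∑' i, p i) ^ x / x ! := by
  classical
  refine tsum_le_of_sum_le' (div_nonneg (pow_nonneg (tsum_nonneg hp0) x) (by positivity))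
    fun u => ?_
  let B : Finset ℕ := u.sup Subtype.val
  calc ∑ J ∈ u, (∏ i ∈ (J : Finset ℕ), p i) * ∏' k : {k // k ∉ (J : Finset ℕ)}, (1 - p k)
      ≤ ∑ J ∈ u.map (Function.Embedding.subtype _), ∏ i ∈ J, p i := by
        rw [sum_map]
        refine sum_le_sum fun J _ => mul_le_of_le_one_right (prod_nonneg fun i _ => hp0 i) ?_
        exact tprod_le_one_of_nonneg (fun k => by linarith [hp1 k]) fun k => by linarith [hp0 k]
    _ ≤ ∑ J ∈ B.powersetCard x, ∏ i ∈ J, p i := by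
        refine sum_le_sum_of_subset_of_nonneg (fun J hJ => ?_) fun J _ _ =>
          prod_nonneg fun i _ => hp0 i
        obtain ⟨J, hJu, rfl⟩ := mem_map.1 hJ
        exact mem_powersetCard.2 ⟨le_sup (f := Subtype.val) hJu, J.2⟩
    _ ≤ (∑ i ∈ B, p i) ^ x / x ! := by
        rw [le_div_iff₀ (by positivity), mul_comm]
        exact B.factorial_mul_sum_powersetCard_prod_le (fun i _ => hp0 i) x
    _ ≤ (∑' i, p i) ^ x / x ! := by
        gcongr
        · exact sum_nonneg fun i _ => hp0 i
        · exact hsum.sum_le_tsum B fun i _ => hp0 i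

theorem exp_le_pb_one_div_poissonPMF {p : ℕ → ℝ} {s l Δ : ℝ} (hsum : Summable p)
    (hp0 : ∀ i, 0 ≤ p i) (hps : ∀ i, p i ≤ s) (hs : s < 1) (hl : ∑' i, p i = l) (hlpos : 0 < l)
    (hΔ : ∑' i, p i ^ 2 = l * Δ) :
    exp (Δ * (1 - Δ / 2 - l / (2 * (1 - s)))) ≤ pb p 1 / poissonPMF l 1 := by
  have hp1 : ∀ i, p i < 1 := fun i => (hps i).trans_lt hs
  have hΔ0 : 0 ≤ Δ := nonneg_of_mul_nonneg_right (hΔ ▸ tsum_nonneg fun i => sq_nonneg (p i)) hlpos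
  have hprod : exp (-l - l * Δ / (2 * (1 - s))) ≤ ∏' k, (1 - p k) := by
    rw [← exp_tsum_log_one_sub hsum hp1, exp_le_exp, ← hΔ, ← hl]
    exact neg_tsum_sub_tsum_sq_div_le_tsum_log_one_sub hsum hp0 hps hs
  have hdiv : l * (1 + Δ) ≤ ∑' i, p i / (1 - p i) := by
    linarith [tsum_add_tsum_sq_le_tsum_div_one_sub hsum hp0 hps hs]
  have hquad : exp (Δ - Δ ^ 2 / 2) ≤ 1 + Δ := by
    rw [← le_log_iff_exp_le (by linarith)]
    exact sub_sq_div_two_le_log_one_add hΔ0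
  rw [pb_one hsum hp1, poissonPMF, pow_one, factorial_one, cast_one, div_one,
    le_div_iff₀ (by positivity)]
  calc exp (Δ * (1 - Δ / 2 - l / (2 * (1 - s)))) * (exp (-l) * l)
      = exp (Δ - Δ ^ 2 / 2) * (exp (-l - l * Δ / (2 * (1 - s))) * l) := by
        simp only [← mul_assoc, ← exp_add]; ring_nf
    _ ≤ (1 + Δ) * (exp (-l - l * Δ / (2 * (1 - s))) * l) := by gcongr
    _ = exp (-l - l * Δ / (2 * (1 - s))) * (l * (1 + Δ)) := by ring
    _ ≤ (∏' k, (1 - p k)) * ∑' i, p i / (1 - p i) :=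
        mul_le_mul hprod hdiv (by positivity) ((exp_pos _).le.trans hprod)

theorem pb_div_poissonPMF_le_exp {p : ℕ → ℝ} {l : ℝ} (hsum : Summable p) (hp0 : ∀ i, 0 ≤ p i)
    (hp1 : ∀ i, p i ≤ 1) (hl : ∑' i, p i = l) (hlpos : 0 < l) (x : ℕ) :
    pb p x / poissonPMF l x ≤ exp l := by
  rw [poissonPMF, div_le_iff₀ (by positivity)]
  calc pb p x ≤ l ^ x / x ! := hl ▸ pb_le_pow_div_factorial hsum hp0 hp1 x
    _ = exp l * (exp (-l) * l ^ x / x !) := by rw [exp_neg]; field_simp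

theorem stmt_2_general (p : ℕ → ℝ) (hp : ∀ i, p i ∈ Set.Ico (0 : ℝ) 1) (hsum : Summable p)
    (l : ℝ) (hl : l = ∑' i, p i) (hlpos : 0 < l)
    (Δ : ℝ) (hΔ : Δ = l⁻¹ * ∑' i, p i ^ 2)
    (pstar : ℝ) (hpstar : IsGreatest (Set.range p) pstar) :
    Real.exp (Δ * (1 - Δ / 2 - l / (2 * (1 - pstar)))) ≤ pb p 1 / poissonPMF l 1 ∧
      Δ * (1 - Δ / 2 - l / (2 * (1 - pstar))) ≤
        Real.log (⨆ x : ℕ, pb p x / poissonPMF l x) := by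
  have hp0 : ∀ i, 0 ≤ p i := fun i => (hp i).1
  have hps : ∀ i, p i ≤ pstar := fun i => hpstar.2 ⟨i, rfl⟩
  have hs : pstar < 1 := by
    obtain ⟨i, rfl⟩ := hpstar.1
    exact (hp i).2
  have hsq : ∑' i, p i ^ 2 = l * Δ := by rw [hΔ, mul_inv_cancel_left₀ hlpos.ne']
  have hb1 := exp_le_pb_one_div_poissonPMF hsum hp0 hps hs hl.symm hlpos hsq
  have hbdd : BddAbove (Set.range fun x => pb p x / poissonPMF l x) :=
    ⟨exp l, Set.forall_mem_range.2
      (pb_div_poissonPMF_le_exp hsum hp0 (fun i => (hp i).2.le) hl.symm hlpos)⟩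
  have hsup := hb1.trans (le_ciSup hbdd 1)
  exact ⟨hb1, (le_log_iff_exp_le ((exp_pos _).trans_le hsup)).2 hsup⟩

/-- If `λ ≤ 1` then `b(1)/π_λ(1) ≥ exp(Δ(1 − Δ/2 − λ/(2(1 − p*))))`; in particular
`log ρ(Q, Poiss_λ) ≥ Δ(1 − Δ/2 − λ/(2(1 − p*)))`. -/
theorem stmt_2 (p : ℕ → ℝ) (hp : ∀ i, p i ∈ Set.Ico (0 : ℝ) 1) (hsum : Summable p)
    (l : ℝ) (hl : l = ∑' i, p i) (hlpos : 0 < l) (hl1 : l ≤ 1)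
    (Δ : ℝ) (hΔ : Δ = l⁻¹ * ∑' i, p i ^ 2)
    (pstar : ℝ) (hpstar : IsGreatest (Set.range p) pstar) :
    Real.exp (Δ * (1 - Δ / 2 - l / (2 * (1 - pstar)))) ≤ pb p 1 / poissonPMF l 1 ∧
      Δ * (1 - Δ / 2 - l / (2 * (1 - pstar))) ≤
        Real.log (⨆ x : ℕ, pb p x / poissonPMF l x) :=
  stmt_2_general p hp hsum l hl hlpos Δ hΔ pstar hpstar
end

section
/- The total variation distance satisfies d_TV(Q, Poiss_λ) ≤ min(1, λ) · (1 − ρ(Q, Poiss_λ)^{−1}), where ρ(Q, Poiss_λ) := sup_{x ≥ 0} b(x)/π_λ(x). -/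
open scoped BigOperators

/-! Writing `b = pb p`, `π = poissonPMF l` and `c = ρ⁻¹`, we have `c • b ≤ π`, so the positive
part of `b - π` is at most `(1 - c) b`, and it vanishes at `0` because
`b 0 = ∏ (1 - p i) ≤ exp (-λ) = π 0`. As `d_TV` is the total mass of this positive part,
`d_TV ≤ (1 - c) (1 - b 0)`, and `1 - b 0 ≤ min 1 λ` by `∏ (1 - p i) ≥ 1 - ∑ p i`.

That `b` is a probability distribution comes from writing the weight of a success set `J` as
`∏' (1 - p) · ∏_{i ∈ J} p i / (1 - p i)`: summed over all finite `J` this gives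
`∏' (1 - p) · ∏' (1 + p / (1 - p)) = 1`. -/

open Filter Finset Topology

theorem prod_mul_tprod_subtype_compl_of_multipliable {α β : Type*} [CommMonoid α]
    [TopologicalSpace α] [ContinuousMul α] [T2Space α] {f : β → α} (s : Finset β)
    (h : Multipliable fun x : {x // x ∉ s} => f x) :
    (∏ x ∈ s, f x) * ∏' x : {x // x ∉ s}, f x = ∏' x, f x :=
  ((s.hasProd f).mul_compl h.hasProd).tprod_eq.symm

section RealProducts

variable {ι : Type*} {p : ι → ℝ}

theorem multipliable_one_sub_of_summable (hp : Summable p) : Multipliable fun i => 1 - p i := by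
  simpa only [sub_eq_add_neg] using Real.multipliable_one_add_of_summable hp.neg

theorem summable_div_one_sub_of_summable (hp : Summable p) :
    Summable fun i => p i / (1 - p i) := by
  have hinv : Tendsto (fun i => (1 - p i)⁻¹) cofinite (𝓝 1) := by
    simpa using (hp.tendsto_cofinite_zero.const_sub 1).inv₀ (by norm_num)
  refine summable_of_isBigO hp ?_
  simpa only [div_eq_mul_inv, mul_one] using
    (Asymptotics.isBigO_refl p cofinite).mul (hinv.isBigO_one ℝ)

theorem summable_prod_finset_of_summable (hp0 : ∀ i, 0 ≤ p i) (hp : Summable p) :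
    Summable (∏ i ∈ ·, p i) := by
  classical
  refine summable_of_sum_le (fun J => prod_nonneg fun i _ => hp0 i)
    (c := Real.exp (∑' i, p i)) fun S => ?_
  calc ∑ J ∈ S, ∏ i ∈ J, p i ≤ ∑ J ∈ (S.sup id).powerset, ∏ i ∈ J, p i :=
        sum_le_sum_of_subset_of_nonneg (fun J hJ => mem_powerset.2 (le_sup (f := id) hJ))
          fun J _ _ => prod_nonneg fun i _ => hp0 i
    _ = ∏ i ∈ S.sup id, (1 + p i) := (prod_one_add _).symm
    _ ≤ ∏ i ∈ S.sup id, Real.exp (p i) :=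
        prod_le_prod (fun i _ => by linarith [hp0 i]) fun i _ => by
          linarith [Real.add_one_le_exp (p i)]
    _ = Real.exp (∑ i ∈ S.sup id, p i) := (Real.exp_sum _ _).symm
    _ ≤ Real.exp (∑' i, p i) := Real.exp_le_exp.2 (hp.sum_le_tsum _ fun i _ => hp0 i)

theorem one_sub_sum_le_prod_one_sub (hp0 : ∀ i, 0 ≤ p i) (hp1 : ∀ i, p i ≤ 1) (s : Finset ι) :
    1 - ∑ i ∈ s, p i ≤ ∏ i ∈ s, (1 - p i) := by
  classical
  induction s using Finset.induction_on with
  | empty => simp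
  | insert a s ha ih =>
    rw [sum_insert ha, prod_insert ha]
    have hprod : ∏ i ∈ s, (1 - p i) ≤ 1 :=
      prod_le_one (fun i _ => by linarith [hp1 i]) fun i _ => by linarith [hp0 i]
    nlinarith [hp0 a]

theorem one_sub_tsum_le_tprod_one_sub (hp0 : ∀ i, 0 ≤ p i) (hp1 : ∀ i, p i ≤ 1)
    (hp : Summable p) : 1 - ∑' i, p i ≤ ∏' i, (1 - p i) := by
  refine ge_of_tendsto (multipliable_one_sub_of_summable hp).hasProd (.of_forall fun s => ?_)
  calc 1 - ∑' i, p i ≤ 1 - ∑ i ∈ s, p i := by linarith [hp.sum_le_tsum s fun i _ => hp0 i]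
    _ ≤ ∏ i ∈ s, (1 - p i) := one_sub_sum_le_prod_one_sub hp0 hp1 s

theorem tprod_one_sub_le_exp_neg_tsum (hp1 : ∀ i, p i < 1) (hp : Summable p) :
    ∏' i, (1 - p i) ≤ Real.exp (-∑' i, p i) := by
  have hpos : ∀ i, 0 < 1 - p i := fun i => sub_pos.2 (hp1 i)
  have hlog : Summable fun i => Real.log (1 - p i) := by
    simpa only [sub_eq_add_neg] using Real.summable_log_one_add_of_summable hp.neg
  rw [← Real.rexp_tsum_eq_tprod hpos hlog, ← tsum_neg]
  exact Real.exp_le_exp.2 <| hlog.tsum_le_tsum (fun i => by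
    linarith [Real.log_le_sub_one_of_pos (hpos i)]) hp.neg

end RealProducts

section BernoulliWeight

variable {ι : Type*}

/-- The probability that, among independent trials succeeding with probabilities `p i`,
exactly those indexed by `J` succeed. -/
noncomputable def bernoulliWeight (p : ι → ℝ) (J : Finset ι) : ℝ :=
  (∏ i ∈ J, p i) * ∏' k : {k // k ∉ J}, (1 - p k)

variable {p : ι → ℝ}

theorem bernoulliWeight_nonneg (hp0 : ∀ i, 0 ≤ p i) (hp1 : ∀ i, p i ≤ 1) (J : Finset ι) :
    0 ≤ bernoulliWeight p J :=
  mul_nonneg (prod_nonneg fun i _ => hp0 i) (tprod_nonneg fun k => sub_nonneg.2 (hp1 k))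

theorem bernoulliWeight_eq (hp1 : ∀ i, p i < 1) (hp : Summable p) (J : Finset ι) :
    bernoulliWeight p J = (∏' k, (1 - p k)) * ∏ i ∈ J, p i / (1 - p i) := by
  have htail : Multipliable fun k : {k // k ∉ J} => 1 - p k :=
    multipliable_one_sub_of_summable (hp.subtype _)
  have hsplit : ∏ i ∈ J, p i = (∏ i ∈ J, (1 - p i)) * ∏ i ∈ J, p i / (1 - p i) := by
    rw [← prod_mul_distrib]
    exact prod_congr rfl fun i _ => (mul_div_cancel₀ _ (sub_pos.2 (hp1 i)).ne').symm
  rw [bernoulliWeight, ← prod_mul_tprod_subtype_compl_of_multipliable J htail, hsplit]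
  ring

theorem hasSum_bernoulliWeight (hp0 : ∀ i, 0 ≤ p i) (hp1 : ∀ i, p i < 1) (hp : Summable p) :
    HasSum (bernoulliWeight p) 1 := by
  have hq0 : ∀ i, 0 ≤ p i / (1 - p i) := fun i => div_nonneg (hp0 i) (sub_pos.2 (hp1 i)).le
  have hprods := summable_prod_finset_of_summable hq0 (summable_div_one_sub_of_summable hp)
  have hinv : ∀ i, (1 - p i) * (1 + p i / (1 - p i)) = 1 := fun i => by
    field_simp [(sub_pos.2 (hp1 i)).ne']
    ring
  have hone : (∏' k, (1 - p k)) * ∏' k, (1 + p k / (1 - p k)) = 1 := by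
    rw [← (multipliable_one_sub_of_summable hp).tprod_mul
      (multipliable_one_add_of_summable_prod hprods)]
    simp only [hinv, tprod_one]
  have h := hprods.hasSum.mul_left (∏' k, (1 - p k))
  rwa [← tprod_one_add hprods, hone, ← funext (bernoulliWeight_eq hp1 hp)] at h

end BernoulliWeight

section PoissonBinomial

variable {p : ℕ → ℝ}

theorem hasSum_pb (hp0 : ∀ i, 0 ≤ p i) (hp1 : ∀ i, p i < 1) (hp : Summable p) :
    HasSum (pb p) 1 :=
  (hasSum_bernoulliWeight hp0 hp1 hp).tsum_fiberwise Finset.card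

theorem pb_nonneg (hp0 : ∀ i, 0 ≤ p i) (hp1 : ∀ i, p i ≤ 1) (x : ℕ) : 0 ≤ pb p x :=
  tsum_nonneg fun J => bernoulliWeight_nonneg hp0 hp1 J

theorem pb_zero (p : ℕ → ℝ) : pb p 0 = ∏' k, (1 - p k) := by
  rw [pb, tsum_eq_single ⟨∅, card_empty⟩ fun J hJ => absurd (Subtype.ext (card_eq_zero.1 J.2)) hJ]
  simpa using (Equiv.subtypeUnivEquiv fun k => notMem_empty k).tprod_eq fun k => 1 - p k

end PoissonBinomial

section Poisson

variable {l : ℝ}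

theorem poissonPMF_pos (hl : 0 < l) (x : ℕ) : 0 < poissonPMF l x := by
  unfold poissonPMF
  positivity

theorem hasSum_poissonPMF (hl : 0 ≤ l) : HasSum (poissonPMF l) 1 :=
  ProbabilityTheory.hasSum_one_poissonMeasure ⟨l, hl⟩

theorem poissonPMF_zero : poissonPMF l 0 = Real.exp (-l) := by
  simp [poissonPMF]

end Poisson

section TotalVariation

variable {α : Type*} {b π : α → ℝ}

theorem tsum_abs_sub_le_two_mul {s G : ℝ} {g : α → ℝ} (hb : HasSum b s) (hπ : HasSum π s)
    (hg0 : ∀ x, 0 ≤ g x) (hg : ∀ x, b x - π x ≤ g x) (hG : HasSum g G) :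
    ∑' x, |b x - π x| ≤ 2 * G := by
  have habs : Summable fun x => |b x - π x| := (hb.summable.sub hπ.summable).abs
  have h := hasSum_le (fun x => abs_le.2 ⟨by linarith [hg0 x], by linarith [hg x]⟩)
    habs.hasSum ((hG.mul_left 2).sub (hb.sub hπ))
  linarith

theorem inv_iSup_div_mul_le (hb : ∀ x, 0 ≤ b x) (hπ : ∀ x, 0 < π x) (x : α) :
    (⨆ y, b y / π y)⁻¹ * b x ≤ π x := by
  -- If the ratios are unbounded, `⨆` is the junk value `0`, and so is its inverse.
  rcases (Real.iSup_nonneg fun y => div_nonneg (hb y) (hπ y).le).eq_or_lt with h | h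
  · rw [← h, inv_zero, zero_mul]
    exact (hπ x).le
  · have hbdd : BddAbove (Set.range fun y => b y / π y) := by
      by_contra hnb
      exact h.ne' (Real.iSup_of_not_bddAbove hnb)
    rw [inv_mul_le_iff₀ h, ← div_le_iff₀ (hπ x)]
    exact le_ciSup hbdd x

theorem inv_iSup_div_le_one (hb : HasSum b 1) (hb0 : ∀ x, 0 ≤ b x) (hπ : HasSum π 1)
    (hπ0 : ∀ x, 0 < π x) : (⨆ y, b y / π y)⁻¹ ≤ 1 := by
  simpa using hasSum_le (inv_iSup_div_mul_le hb0 hπ0) (hb.mul_left _) hπ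

theorem half_tsum_abs_sub_le_of_mul_le {c : ℝ} (hb : HasSum b 1) (hπ : HasSum π 1)
    (hb0 : ∀ x, 0 ≤ b x) (hc : c ≤ 1) (hcb : ∀ x, c * b x ≤ π x) (x₀ : α)
    (hx₀ : b x₀ ≤ π x₀) : 1 / 2 * ∑' x, |b x - π x| ≤ (1 - c) * (1 - b x₀) := by
  classical
  have hg : ∀ x, b x - π x ≤ (1 - c) * Function.update b x₀ 0 x := fun x => by
    rcases eq_or_ne x x₀ with rfl | hx
    · simp only [Function.update_self, mul_zero]
      linarith
    · rw [Function.update_of_ne hx]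
      linarith [hcb x]
  have h := tsum_abs_sub_le_two_mul hb hπ
    (fun x => mul_nonneg (sub_nonneg.2 hc) ((le_update_iff.2 ⟨le_rfl, fun j _ => hb0 j⟩ : 0 ≤ Function.update b x₀ 0) x)) hg
    ((hb.update x₀ 0).mul_left (1 - c))
  linarith

end TotalVariation

/-- `d_TV(Q, Poiss_λ) ≤ min(1, λ) · (1 − ρ(Q, Poiss_λ)⁻¹)`. -/
theorem stmt_3 (p : ℕ → ℝ) (hp : ∀ i, p i ∈ Set.Ico (0 : ℝ) 1) (hsum : Summable p)
    (l : ℝ) (hl : l = ∑' i, p i) (hlpos : 0 < l) :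
    (1 / 2) * ∑' x : ℕ, |pb p x - poissonPMF l x| ≤
      min 1 l * (1 - (⨆ x : ℕ, pb p x / poissonPMF l x)⁻¹) := by
  have hp0 : ∀ i, 0 ≤ p i := fun i => (hp i).1
  have hp1 : ∀ i, p i < 1 := fun i => (hp i).2
  have hb := hasSum_pb hp0 hp1 hsum
  have hb0 := pb_nonneg hp0 fun i => (hp1 i).le
  have hπ := hasSum_poissonPMF hlpos.le
  have hπ0 := poissonPMF_pos hlpos
  have hc := inv_iSup_div_le_one hb hb0 hπ hπ0
  have hlow : 1 - l ≤ pb p 0 := by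
    rw [pb_zero, hl]
    exact one_sub_tsum_le_tprod_one_sub hp0 (fun i => (hp1 i).le) hsum
  have hup : pb p 0 ≤ poissonPMF l 0 := by
    rw [pb_zero, poissonPMF_zero, hl]
    exact tprod_one_sub_le_exp_neg_tsum hp1 hsum
  calc 1 / 2 * ∑' x, |pb p x - poissonPMF l x|
      ≤ (1 - (⨆ x, pb p x / poissonPMF l x)⁻¹) * (1 - pb p 0) :=
        half_tsum_abs_sub_le_of_mul_le hb hπ hb0 hc (inv_iSup_div_mul_le hb0 hπ0) 0 hup
    _ ≤ (1 - (⨆ x, pb p x / poissonPMF l x)⁻¹) * min 1 l := by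
        gcongr
        exact le_min (by linarith [hb0 0]) (by linarith)
    _ = _ := mul_comm _ _
end

section
/- If λ ≤ 1, then d_TV(Q, Poiss_λ) ≤ λ (1 − e^{−Δ}) ≤ Σ_{i≥1} p_i². -/
open scoped BigOperators

/-!
Le Cam's argument, phrased with generating functions. For finitely many indices the Poisson
binomial law has generating function `∏ (p_i X + 1 - p_i)` and `Poiss_λ` has `∏ e^{-p_i} e^{p_i X}`.
The ℓ¹ norm of the coefficient sequence is submultiplicative and every factor has norm `1`, so
telescoping bounds the ℓ¹ distance of the two products by
`∑ ‖Bern(p_i) - Poiss(p_i)‖₁ = ∑ 2 p_i (1 - e^{-p_i})`. Letting the number of factors grow, the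
truncated Poisson binomial masses converge to `b(x)` by dominated convergence, with the summable
dominating family `J ↦ ∏_{i ∈ J} p_i`. Finally `t ↦ 1 - e^{-t}` is concave, and its tangent at `Δ`
gives `∑ p_i (1 - e^{-p_i}) ≤ λ (1 - e^{-Δ})`; then `1 - e^{-Δ} ≤ Δ`.
-/

open Finset Filter Topology PowerSeries Real
open scoped ENNReal

lemma ENNReal.tsum_sum_antidiagonal_eq_tsum_prod (F : ℕ × ℕ → ℝ≥0∞) :
    ∑' n, ∑ kl ∈ antidiagonal n, F kl = ∑' kl : ℕ × ℕ, F kl := by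
  rw [← HasAntidiagonal.sigmaAntidiagonalEquivProd.tsum_eq, ENNReal.tsum_sigma']
  simp [HasAntidiagonal.sigmaAntidiagonalEquivProd, Finset.sum_attach]

-- `ℝ≥0∞`-valued, so that it is meaningful for every power series without summability conditions.
noncomputable def l1Norm (φ : ℝ⟦X⟧) : ℝ≥0∞ := ∑' n, ENNReal.ofReal |coeff n φ|

lemma l1Norm_eq_ofReal_tsum {φ : ℝ⟦X⟧} (h : Summable fun n => |coeff n φ|) :
    l1Norm φ = ENNReal.ofReal (∑' n, |coeff n φ|) :=
  (ENNReal.ofReal_tsum_of_nonneg (fun _ => abs_nonneg _) h).symm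

lemma l1Norm_one : l1Norm 1 = 1 := by
  simp [l1Norm, coeff_one, apply_ite]

lemma l1Norm_add_le (φ ψ : ℝ⟦X⟧) : l1Norm (φ + ψ) ≤ l1Norm φ + l1Norm ψ := by
  rw [l1Norm, l1Norm, l1Norm, ← ENNReal.tsum_add]
  refine ENNReal.tsum_le_tsum fun n => ?_
  rw [map_add, ← ENNReal.ofReal_add (abs_nonneg _) (abs_nonneg _)]
  exact ENNReal.ofReal_le_ofReal (abs_add_le _ _)

lemma l1Norm_mul_le (φ ψ : ℝ⟦X⟧) : l1Norm (φ * ψ) ≤ l1Norm φ * l1Norm ψ := by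
  set A := fun k => ENNReal.ofReal |coeff k φ|
  set B := fun l => ENNReal.ofReal |coeff l ψ|
  have hcoeff (n : ℕ) :
      ENNReal.ofReal |coeff n (φ * ψ)| ≤ ∑ kl ∈ antidiagonal n, A kl.1 * B kl.2 := by
    rw [coeff_mul]
    refine (ENNReal.ofReal_le_ofReal (abs_sum_le_sum_abs _ _)).trans_eq ?_
    rw [ENNReal.ofReal_sum_of_nonneg fun _ _ => abs_nonneg _]
    simp_rw [abs_mul, ENNReal.ofReal_mul (abs_nonneg _), A, B]
  calc l1Norm (φ * ψ) ≤ ∑' n, ∑ kl ∈ antidiagonal n, A kl.1 * B kl.2 := ENNReal.tsum_le_tsum hcoeff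
    _ = ∑' kl : ℕ × ℕ, A kl.1 * B kl.2 := ENNReal.tsum_sum_antidiagonal_eq_tsum_prod _
    _ = l1Norm φ * l1Norm ψ := by
      rw [ENNReal.tsum_prod' (f := fun kl : ℕ × ℕ => A kl.1 * B kl.2), l1Norm, l1Norm,
        ← ENNReal.tsum_mul_right]
      simp [ENNReal.tsum_mul_left, A, B]

lemma l1Norm_prod_le_one {ι : Type*} (s : Finset ι) (φ : ι → ℝ⟦X⟧)
    (h : ∀ i ∈ s, l1Norm (φ i) ≤ 1) : l1Norm (∏ i ∈ s, φ i) ≤ 1 :=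
  Finset.prod_induction φ (l1Norm · ≤ 1)
    (fun _ _ ha hb => (l1Norm_mul_le _ _).trans (mul_le_one' ha hb)) l1Norm_one.le h

lemma l1Norm_prod_sub_prod_le {ι : Type*} [DecidableEq ι] (s : Finset ι) (φ ψ : ι → ℝ⟦X⟧)
    (hφ : ∀ i ∈ s, l1Norm (φ i) ≤ 1) (hψ : ∀ i ∈ s, l1Norm (ψ i) ≤ 1) :
    l1Norm (∏ i ∈ s, φ i - ∏ i ∈ s, ψ i) ≤ ∑ i ∈ s, l1Norm (φ i - ψ i) := by
  induction s using Finset.induction_on with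
  | empty => simp [l1Norm]
  | insert a s ha ih =>
    rw [prod_insert ha, prod_insert ha, sum_insert ha]
    have hφs := l1Norm_prod_le_one s φ fun i hi => hφ i (mem_insert_of_mem hi)
    calc l1Norm (φ a * ∏ i ∈ s, φ i - ψ a * ∏ i ∈ s, ψ i)
        = l1Norm ((φ a - ψ a) * ∏ i ∈ s, φ i + ψ a * (∏ i ∈ s, φ i - ∏ i ∈ s, ψ i)) := by
          congr 1; ring
      _ ≤ l1Norm (φ a - ψ a) * l1Norm (∏ i ∈ s, φ i)
          + l1Norm (ψ a) * l1Norm (∏ i ∈ s, φ i - ∏ i ∈ s, ψ i) :=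
          (l1Norm_add_le _ _).trans (add_le_add (l1Norm_mul_le _ _) (l1Norm_mul_le _ _))
      _ ≤ l1Norm (φ a - ψ a) * 1 + 1 * ∑ i ∈ s, l1Norm (φ i - ψ i) := by
          gcongr
          · exact hψ a (mem_insert_self a s)
          · exact ih (fun i hi => hφ i (mem_insert_of_mem hi))
              fun i hi => hψ i (mem_insert_of_mem hi)
      _ = _ := by rw [mul_one, one_mul]

lemma hasSum_poissonPMF_s5 (a : ℝ) : HasSum (poissonPMF a) 1 := by
  have h := (NormedSpace.expSeries_div_hasSum_exp a).mul_left (exp (-a))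
  rw [← exp_eq_exp_ℝ, ← exp_add, neg_add_cancel, exp_zero] at h
  exact h.congr_fun fun n => by rw [poissonPMF, mul_div_assoc]

lemma poissonPMF_nonneg {a : ℝ} (ha : 0 ≤ a) (n : ℕ) : 0 ≤ poissonPMF a n := by
  unfold poissonPMF; positivity

noncomputable def poissonSeries (a : ℝ) : ℝ⟦X⟧ := mk (poissonPMF a)

lemma poissonSeries_eq_C_mul_rescale_exp (a : ℝ) :
    poissonSeries a = C (exp (-a)) * rescale a (exp ℝ) := by
  ext n
  simp [poissonSeries, poissonPMF, coeff_exp, coeff_rescale]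
  ring

lemma poissonSeries_add (a b : ℝ) :
    poissonSeries (a + b) = poissonSeries a * poissonSeries b := by
  simp only [poissonSeries_eq_C_mul_rescale_exp, ← exp_mul_exp_eq_exp_add, neg_add, Real.exp_add,
    map_mul]
  ring

lemma poissonSeries_sum {ι : Type*} (s : Finset ι) (a : ι → ℝ) :
    poissonSeries (∑ i ∈ s, a i) = ∏ i ∈ s, poissonSeries (a i) := by
  classical
  induction s using Finset.induction_on with
  | empty => ext (_ | n) <;> simp [poissonSeries, poissonPMF]
  | insert i s hi ih => rw [sum_insert hi, prod_insert hi, poissonSeries_add, ih]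

noncomputable def bernoulliSeries (a : ℝ) : ℝ⟦X⟧ := C a * X + C (1 - a)

lemma coeff_prod_bernoulliSeries {ι : Type*} [DecidableEq ι] (s : Finset ι) (q : ι → ℝ) (x : ℕ) :
    coeff x (∏ i ∈ s, bernoulliSeries (q i))
      = ∑ J ∈ s.powersetCard x, (∏ i ∈ J, q i) * ∏ k ∈ s \ J, (1 - q k) := by
  simp only [bernoulliSeries, prod_add, prod_mul_distrib, prod_const, ← map_prod, map_sum]
  simp_rw [coeff_mul_C, coeff_C_mul_X_pow, ite_mul, zero_mul, ← sum_filter,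
    powersetCard_eq_filter, eq_comm]

lemma l1Norm_poissonSeries {a : ℝ} (ha : 0 ≤ a) : l1Norm (poissonSeries a) = 1 := by
  have h := hasSum_poissonPMF_s5 a
  simp_rw [l1Norm, poissonSeries, coeff_mk, abs_of_nonneg (poissonPMF_nonneg ha _)]
  rw [← ENNReal.ofReal_tsum_of_nonneg (poissonPMF_nonneg ha) h.summable, h.tsum_eq,
    ENNReal.ofReal_one]

lemma l1Norm_bernoulliSeries {a : ℝ} (ha₀ : 0 ≤ a) (ha₁ : a ≤ 1) :
    l1Norm (bernoulliSeries a) = 1 := by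
  rw [l1Norm, tsum_eq_sum (s := range 2)]
  · simp [sum_range_succ, bernoulliSeries, abs_of_nonneg ha₀, abs_of_nonneg (sub_nonneg.2 ha₁),
      ← ENNReal.ofReal_add (sub_nonneg.2 ha₁) ha₀]
  · rintro (_ | _ | n) hn <;> simp_all [bernoulliSeries]

lemma l1Norm_bernoulliSeries_sub_poissonSeries {a : ℝ} (ha : 0 ≤ a) :
    l1Norm (bernoulliSeries a - poissonSeries a) = ENNReal.ofReal (2 * (a * (1 - exp (-a)))) := by
  have hπ := hasSum_poissonPMF_s5 a
  have htail (n : ℕ) :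
      |coeff (n + 2) (bernoulliSeries a - poissonSeries a)| = poissonPMF a (n + 2) := by
    simp [bernoulliSeries, poissonSeries, abs_of_nonneg (poissonPMF_nonneg ha _)]
  have hsum : Summable fun n => |coeff n (bernoulliSeries a - poissonSeries a)| := by
    rw [← summable_nat_add_iff 2, funext htail, summable_nat_add_iff 2]
    exact hπ.summable
  have hπsplit := hπ.summable.sum_add_tsum_nat_add 2
  rw [l1Norm_eq_ofReal_tsum hsum, ← hsum.sum_add_tsum_nat_add 2, tsum_congr htail]
  rw [hπ.tsum_eq] at hπsplit
  congr 1
  have hexp : exp (-a) ≤ 1 := exp_le_one_iff.2 (neg_nonpos.2 ha)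
  simp [sum_range_succ, bernoulliSeries, poissonSeries, poissonPMF] at hπsplit ⊢
  rw [abs_of_nonpos (by linarith [one_sub_le_exp_neg a]), abs_of_nonneg (by nlinarith)]
  linarith

lemma mul_one_sub_exp_neg_nonneg {a : ℝ} (ha : 0 ≤ a) : 0 ≤ a * (1 - exp (-a)) :=
  mul_nonneg ha (sub_nonneg.2 (exp_le_one_iff.2 (neg_nonpos.2 ha)))

lemma summable_mul_one_sub_exp_neg {ι : Type*} {p : ι → ℝ} (hp : ∀ i, 0 ≤ p i)
    (hs : Summable p) : Summable fun i => p i * (1 - exp (-p i)) :=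
  hs.of_nonneg_of_le (fun i => mul_one_sub_exp_neg_nonneg (hp i))
    fun i => mul_le_of_le_one_right (hp i) (sub_le_self _ (exp_pos _).le)

theorem l1Norm_prod_bernoulliSeries_sub_poissonSeries_le {ι : Type*} (s : Finset ι) (q : ι → ℝ)
    (hq : ∀ i ∈ s, q i ∈ Set.Icc 0 1) :
    l1Norm (∏ i ∈ s, bernoulliSeries (q i) - poissonSeries (∑ i ∈ s, q i))
      ≤ ENNReal.ofReal (2 * ∑ i ∈ s, q i * (1 - exp (-q i))) := by
  classical
  rw [poissonSeries_sum, mul_sum, ENNReal.ofReal_sum_of_nonneg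
    fun i hi => mul_nonneg two_pos.le (mul_one_sub_exp_neg_nonneg (hq i hi).1)]
  refine (l1Norm_prod_sub_prod_le s _ _
    (fun i hi => (l1Norm_bernoulliSeries (hq i hi).1 (hq i hi).2).le)
    fun i hi => (l1Norm_poissonSeries (hq i hi).1).le).trans_eq ?_
  exact sum_congr rfl fun i hi => l1Norm_bernoulliSeries_sub_poissonSeries (hq i hi).1

lemma sum_abs_coeff_le_of_l1Norm_le {φ : ℝ⟦X⟧} {c : ℝ} (hc : 0 ≤ c)
    (h : l1Norm φ ≤ ENNReal.ofReal c) (t : Finset ℕ) : ∑ x ∈ t, |coeff x φ| ≤ c := by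
  rw [← ENNReal.ofReal_le_ofReal_iff hc, ENNReal.ofReal_sum_of_nonneg fun _ _ => abs_nonneg _]
  exact (ENNReal.sum_le_tsum t).trans h

lemma tendsto_prod_range_sdiff_one_sub {q : ℕ → ℝ} (hq : Summable q) (J : Finset ℕ) :
    Tendsto (fun n => ∏ k ∈ range n \ J, (1 - q k)) atTop
      (𝓝 (∏' k : {k : ℕ // k ∉ J}, (1 - q k))) := by
  have hmul : Multipliable fun k : {k : ℕ // k ∉ J} => 1 - q k := by
    simpa only [sub_eq_add_neg] using
      Real.multipliable_one_add_of_summable (f := fun k : {k // k ∉ J} => -q k) (hq.subtype _).neg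
  refine ((hasProd_subtype_iff_mulIndicator (s := {k | k ∉ J}) (f := fun k => 1 - q k)).mp
    hmul.hasProd).tendsto_prod_nat.congr fun n => ?_
  rw [prod_mulIndicator_eq_prod_filter, sdiff_eq_filter]
  rfl

lemma tendsto_sum_powersetCard_range_pb {q : ℕ → ℝ} (hq : ∀ i, q i ∈ Set.Icc 0 1) (hs : Summable q)
    (x : ℕ) :
    Tendsto (fun n => ∑ J ∈ (range n).powersetCard x, (∏ i ∈ J, q i) * ∏ k ∈ range n \ J, (1 - q k))
      atTop (𝓝 (pb q x)) := by
  set F : ℕ → Finset ℕ → ℝ := fun n J =>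
    if J ⊆ range n then (∏ i ∈ J, q i) * ∏ k ∈ range n \ J, (1 - q k) else 0
  have hF_sum (n : ℕ) : ∑' J : {J : Finset ℕ // J.card = x}, F n J
      = ∑ J ∈ (range n).powersetCard x, (∏ i ∈ J, q i) * ∏ k ∈ range n \ J, (1 - q k) := by
    rw [tsum_eq_sum (s := ((range n).powersetCard x).subtype (·.card = x)),
      sum_subtype_eq_sum_filter,
      filter_true_of_mem fun J hJ => (mem_powersetCard.1 hJ).2]
    · exact sum_congr rfl fun J hJ => if_pos (mem_powersetCard.1 hJ).1
    · intro J hJ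
      rw [mem_subtype, mem_powersetCard] at hJ
      exact if_neg fun h => hJ ⟨h, J.2⟩
  have hF_lim (J : Finset ℕ) : Tendsto (F · J) atTop
      (𝓝 ((∏ i ∈ J, q i) * ∏' k : {k : ℕ // k ∉ J}, (1 - q k))) := by
    obtain ⟨N, hN⟩ := J.exists_nat_subset_range
    refine ((tendsto_prod_range_sdiff_one_sub hs J).const_mul _).congr' ?_
    filter_upwards [eventually_ge_atTop N] with n hn
    exact (if_pos (hN.trans (range_subset_range.2 hn))).symm
  have hF_le (n : ℕ) (J : Finset ℕ) : ‖F n J‖ ≤ ∏ i ∈ J, q i := by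
    have hqJ : 0 ≤ ∏ i ∈ J, q i := prod_nonneg fun i _ => (hq i).1
    have h₀ : ∀ k ∈ range n \ J, 0 ≤ 1 - q k := fun k _ => sub_nonneg.2 (hq k).2
    simp only [F]
    split_ifs
    · rw [Real.norm_of_nonneg (mul_nonneg hqJ (prod_nonneg h₀))]
      exact mul_le_of_le_one_right hqJ (prod_le_one h₀ fun k _ => sub_le_self _ (hq k).1)
    · simpa using hqJ
  have hdom : Summable fun J : {J : Finset ℕ // J.card = x} => ∏ i ∈ (J : Finset ℕ), q i :=
    (summable_finsetProd_of_summable_nonneg (fun i => (hq i).1) hs).subtype _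
  simp_rw [← hF_sum]
  exact tendsto_tsum_of_dominated_convergence hdom (fun J => hF_lim J)
    (.of_forall fun n J => hF_le n J)

theorem tsum_abs_pb_sub_poissonPMF_le {q : ℕ → ℝ} (hq : ∀ i, q i ∈ Set.Icc 0 1)
    (hs : Summable q) :
    ∑' x, |pb q x - poissonPMF (∑' i, q i) x| ≤ 2 * ∑' i, q i * (1 - exp (-q i)) := by
  refine Real.tsum_le_of_sum_le (fun x => abs_nonneg _) fun t => ?_
  have hlim : Tendsto (fun n => ∑ x ∈ t,
      |coeff x (∏ i ∈ range n, bernoulliSeries (q i) - poissonSeries (∑ i ∈ range n, q i))|)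
      atTop (𝓝 (∑ x ∈ t, |pb q x - poissonPMF (∑' i, q i) x|)) := by
    refine tendsto_finsetSum _ fun x _ => ?_
    have hcont : Continuous fun a => poissonPMF a x := by unfold poissonPMF; fun_prop
    simp only [map_sub, coeff_prod_bernoulliSeries, poissonSeries, coeff_mk]
    exact ((tendsto_sum_powersetCard_range_pb hq hs x).sub
      ((hcont.tendsto _).comp hs.hasSum.tendsto_sum_nat)).abs
  have hB : 0 ≤ 2 * ∑' i, q i * (1 - exp (-q i)) :=
    mul_nonneg zero_le_two (tsum_nonneg fun i => mul_one_sub_exp_neg_nonneg (hq i).1)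
  refine le_of_tendsto' hlim fun n => sum_abs_coeff_le_of_l1Norm_le hB
    ((l1Norm_prod_bernoulliSeries_sub_poissonSeries_le _ q fun i _ => hq i).trans ?_) t
  gcongr
  exact (summable_mul_one_sub_exp_neg (fun i => (hq i).1) hs).sum_le_tsum _
    fun i _ => mul_one_sub_exp_neg_nonneg (hq i).1

lemma tsum_mul_one_sub_exp_neg_le {ι : Type*} {p : ι → ℝ} (hp : ∀ i, 0 ≤ p i) (hs : Summable p)
    (hs₂ : Summable fun i => p i ^ 2) {Δ : ℝ} (hΔ : Δ * ∑' i, p i = ∑' i, p i ^ 2) :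
    ∑' i, p i * (1 - exp (-p i)) ≤ (∑' i, p i) * (1 - exp (-Δ)) := by
  have htangent (t : ℝ) : 1 - exp (-t) ≤ 1 - exp (-Δ) + exp (-Δ) * (t - Δ) := by
    have h := add_one_le_exp (Δ - t)
    have : exp (-Δ) * exp (Δ - t) = exp (-t) := by rw [← exp_add]; ring_nf
    nlinarith [exp_pos (-Δ)]
  have hRHS := (hs.hasSum.mul_right (1 - exp (-Δ))).add
    ((hs₂.hasSum.sub (hs.hasSum.mul_left Δ)).mul_left (exp (-Δ)))
  rw [hΔ, sub_self, mul_zero, add_zero] at hRHS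
  refine hasSum_le (fun i => ?_) (summable_mul_one_sub_exp_neg hp hs).hasSum hRHS
  nlinarith [mul_le_mul_of_nonneg_left (htangent (p i)) (hp i)]

theorem stmt_5_general (p : ℕ → ℝ) (hp : ∀ i, p i ∈ Set.Ico (0 : ℝ) 1) (hsum : Summable p)
    (l : ℝ) (hl : l = ∑' i, p i) (hlpos : 0 < l)
    (Δ : ℝ) (hΔ : Δ = l⁻¹ * ∑' i, p i ^ 2) :
    (1 / 2) * ∑' x : ℕ, |pb p x - poissonPMF l x| ≤ l * (1 - Real.exp (-Δ)) ∧
      l * (1 - Real.exp (-Δ)) ≤ ∑' i, p i ^ 2 := by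
  have hsum₂ : Summable fun i => p i ^ 2 :=
    hsum.of_nonneg_of_le (fun i => sq_nonneg _) fun i => by nlinarith [(hp i).1, (hp i).2]
  have hΔl : Δ * l = ∑' i, p i ^ 2 := by rw [hΔ, mul_right_comm, inv_mul_cancel₀ hlpos.ne', one_mul]
  constructor
  · calc 1 / 2 * ∑' x, |pb p x - poissonPMF l x|
        ≤ 1 / 2 * (2 * ∑' i, p i * (1 - exp (-p i))) := by
          rw [hl]
          gcongr
          exact tsum_abs_pb_sub_poissonPMF_le (fun i => Set.Ico_subset_Icc_self (hp i)) hsum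
      _ = ∑' i, p i * (1 - exp (-p i)) := by ring
      _ ≤ l * (1 - exp (-Δ)) := by
          rw [hl] at hΔl ⊢
          exact tsum_mul_one_sub_exp_neg_le (fun i => (hp i).1) hsum hsum₂ hΔl
  · calc l * (1 - exp (-Δ)) ≤ l * Δ :=
          mul_le_mul_of_nonneg_left (by linarith [one_sub_le_exp_neg Δ]) hlpos.le
      _ = ∑' i, p i ^ 2 := by rw [mul_comm, hΔl]

/-- If `λ ≤ 1` then `d_TV(Q, Poiss_λ) ≤ λ(1 − e^{−Δ}) ≤ Σ p_i²`. -/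
theorem stmt_5 (p : ℕ → ℝ) (hp : ∀ i, p i ∈ Set.Ico (0 : ℝ) 1) (hsum : Summable p)
    (l : ℝ) (hl : l = ∑' i, p i) (hlpos : 0 < l) (hl1 : l ≤ 1)
    (Δ : ℝ) (hΔ : Δ = l⁻¹ * ∑' i, p i ^ 2) :
    (1 / 2) * ∑' x : ℕ, |pb p x - poissonPMF l x| ≤ l * (1 - Real.exp (-Δ)) ∧
      l * (1 - Real.exp (-Δ)) ≤ ∑' i, p i ^ 2 :=
  stmt_5_general p hp hsum l hl hlpos Δ hΔ
end
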